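/- arXiv:cs/0512052 — 4 statements merged into one kernel-verified Lean document; each statement's English description precedes it below -/
import Mathlib

section
/- Let Σ = {A, C, G, T} be the DNA alphabet, let l ≥ 1, let d ≥ 1, and let a₁, …, a_d be strings of length l over the sub-alphabet {A, T}. Let s be the string a₁·C·a₂·C·⋯·C·a_d obtained by concatenating a₁, …, a_d with a single letter C inserted between consecutive blocks, and let e ∈ {C, G}. Then for every string w of length l over {A, T}, w is a contiguous substring (infix) of the extended string s·e (s with the single letter e appended) if and only if w ∈ {a₁, …, a_d}. In particular, appending an extension letter from {C, G} creates no new infixes over {A, T} of length l. -/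
/-!
A string over `{A, T}` contains neither the separator `C` nor the extension letter `e`, so any
occurrence of it in `a₁·C·⋯·C·a_d·e` avoids those letters and lies inside a single block `aᵢ`;
having the same length as that block, it is the block.
-/

/-- The DNA alphabet Σ = {A, C, G, T}. -/
inductive Base : Type
  | A | C | G | T
  deriving DecidableEq

namespace List

variable {α : Type*}

theorem infix_append_cons_iff_of_notMem {w x y : List α} {c : α} (hc : c ∉ w) :
    w <:+: x ++ c :: y ↔ w <:+: x ∨ w <:+: y := by
  refine ⟨fun h => ?_, ?_⟩
  · rw [← singleton_append, ← append_assoc, infix_append_iff, infix_concat_iff] at h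
    rcases h with (hsuf | hx) | hy | ⟨l₁, l₂, rfl, hsuf, hpre⟩
    · rcases suffix_concat_iff.mp hsuf with rfl | ⟨t, rfl, -⟩
      · exact .inl nil_infix
      · simp at hc
    · exact .inl hx
    · exact .inr hy
    · rcases suffix_concat_iff.mp hsuf with rfl | ⟨t, rfl, -⟩
      · exact .inr hpre.isInfix
      · simp at hc
  · rintro (h | h)
    · exact infix_append_of_infix_left h
    · exact infix_append_of_infix_right (h.trans (suffix_cons c y).isInfix)

theorem infix_intercalate_singleton_iff_mem {w : List α} {c : α} {as : List (List α)}
    (hc : c ∉ w) (hw : w ≠ []) (hlen : ∀ a ∈ as, a.length = w.length) :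
    w <:+: [c].intercalate as ↔ w ∈ as := by
  induction as with
  | nil => simpa using hw
  | cons a as ih =>
    have hwa : w <:+: a ↔ w = a :=
      ⟨fun h => h.eq_of_length (hlen a mem_cons_self).symm, fun h => h ▸ infix_rfl⟩
    rcases eq_or_ne as [] with rfl | has
    · simp [intercalate_singleton, hwa]
    · rw [intercalate_cons_of_ne_nil has, append_assoc, singleton_append,
        infix_append_cons_iff_of_notMem hc, hwa, ih fun b hb => hlen b (mem_cons_of_mem a hb),
        mem_cons]

end List

theorem stmt1_general (l : ℕ) (hl : 1 ≤ l)
    (as : List (List Base))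
    (hblocks : ∀ a ∈ as, a.length = l ∧ ∀ b ∈ a, b = Base.A ∨ b = Base.T)
    (s : List Base) (hs : s = List.intercalate [Base.C] as)
    (e : Base) (he : e = Base.C ∨ e = Base.G)
    (w : List Base) (hw : w.length = l) (hwAT : ∀ b ∈ w, b = Base.A ∨ b = Base.T) :
    w <:+: (s ++ [e]) ↔ w ∈ as := by
  have hCw : Base.C ∉ w := fun h => by simpa using hwAT _ h
  have hew : e ∉ w := by rcases he with rfl | rfl <;> exact fun h => by simpa using hwAT _ h
  have hw0 : w ≠ [] := List.ne_nil_of_length_pos (hw ▸ hl)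
  rw [hs, List.infix_append_cons_iff_of_notMem hew, List.infix_nil, or_iff_left hw0]
  exact List.infix_intercalate_singleton_iff_mem hCw hw0 fun a ha => (hblocks a ha).1.trans hw.symm

/-- If `a₁, …, a_d` (`d ≥ 1`) are strings of length `l ≥ 1` over the sub-alphabet `{A, T}`,
`s = a₁·C·a₂·C·⋯·C·a_d`, and `e ∈ {C, G}` is an extension letter, then a string `w` of
length `l` over `{A, T}` is a contiguous substring (infix) of the extended string `s·e`
iff `w ∈ {a₁, …, a_d}`: appending an extension letter from `{C, G}` creates no new
infixes over `{A, T}` of length `l`. -/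
theorem stmt1 (l d : ℕ) (hl : 1 ≤ l) (hd : 1 ≤ d)
    (as : List (List Base)) (hlen : as.length = d)
    (hblocks : ∀ a ∈ as, a.length = l ∧ ∀ b ∈ a, b = Base.A ∨ b = Base.T)
    (s : List Base) (hs : s = List.intercalate [Base.C] as)
    (e : Base) (he : e = Base.C ∨ e = Base.G)
    (w : List Base) (hw : w.length = l) (hwAT : ∀ b ∈ w, b = Base.A ∨ b = Base.T) :
    w <:+: (s ++ [e]) ↔ w ∈ as :=
  stmt1_general l hl as hblocks s hs e he w hw hwAT
end

section
/- Let G = (U ∪ V, E) be a bipartite graph in which every vertex of U has degree at least 1 and at most 3. Fix l ≥ 1 and an injective assignment v ↦ x_v of distinct strings x_v of length l over {A, T} to the vertices v ∈ V, and let X = {x_v : v ∈ V} be the probe set. For each u ∈ U with neighborhood N(u) = {v₁, …, v_d} (1 ≤ d ≤ 3, listed in some fixed order), let p_u be the primer obtained by concatenating the Watson-Crick complements comp(x_{v₁}), …, comp(x_{v_d}) with a single letter C inserted between consecutive blocks. Then Spec_X(p_u, {G, C}) = Spec_X(p_u) = {x_v : v ∈ N(u)}. -/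
/-- Watson-Crick complement of a single base: A ↔ T, C ↔ G. -/
def Base.comp : Base → Base
  | A => T
  | T => A
  | C => G
  | G => C

/-- Watson-Crick complement of a string. -/
def compStr (w : List Base) : List Base := w.map Base.comp

/-- The spectrum `Spec_X(y)`: the probes `x ∈ X` whose Watson-Crick complement is a
contiguous substring (infix) of `y`. -/
def Spec (X : Finset (List Base)) (y : List Base) : Finset (List Base) :=
  X.filter (fun x => compStr x <:+: y)

/-- `Spec_X(p, E) = ⋃_{e ∈ E} Spec_X(p·e)`. -/
def SpecE (X : Finset (List Base)) (p : List Base) (E : Finset Base) : Finset (List Base) :=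
  E.biUnion (fun e => Spec X (p ++ [e]))

/-! Since the probes are words over {A, T}, their complements are too, so the letter C of the
primer acts as a separator: a C-free infix of the primer lies inside a single block
comp(x_v), and having the same length l it is that block. Appending G or C creates no new
occurrences, as neither letter occurs in the complement of a probe. -/

namespace List

variable {α : Type*} {c : α} {s xs ys : List α}

theorem eq_nil_of_prefix_cons_of_not_mem (hc : c ∉ s) (h : s <+: c :: ys) : s = [] := by
  rcases prefix_cons_iff.mp h with rfl | ⟨t, rfl, -⟩
  · rfl
  · exact absurd mem_cons_self hc

theorem IsInfix.of_append_cons (hc : c ∉ s) (h : s <:+: xs ++ c :: ys) :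
    s <:+: xs ∨ s <:+: ys := by
  rcases infix_append_iff.mp h with h | h | ⟨l₁, l₂, rfl, h₁, h₂⟩
  · exact .inl h
  · rcases infix_cons_iff.mp h with h | h
    · exact .inl (eq_nil_of_prefix_cons_of_not_mem hc h ▸ nil_infix)
    · exact .inr h
  · have hl₂ : l₂ = [] :=
      eq_nil_of_prefix_cons_of_not_mem (fun h => hc (mem_append_right _ h)) h₂
    subst hl₂
    exact .inl (by simpa using h₁.isInfix)

theorem infix_append_singleton_iff (hc : c ∉ s) : s <:+: xs ++ [c] ↔ s <:+: xs := by
  refine ⟨fun h => ?_, fun h => h.trans (prefix_append xs [c]).isInfix⟩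
  rcases h.of_append_cons hc with h | h
  · exact h
  · exact infix_nil.mp h ▸ nil_infix

theorem IsInfix.exists_infix_of_intercalate (hs : s ≠ []) (hc : c ∉ s) :
    ∀ {bs : List (List α)}, s <:+: [c].intercalate bs → ∃ b ∈ bs, s <:+: b
  | [], h => absurd (infix_nil.mp h) hs
  | [b], h => ⟨b, mem_singleton_self b, by simpa using h⟩
  | b :: b' :: bs, h => by
    rw [intercalate_cons_cons, append_assoc, singleton_append] at h
    rcases h.of_append_cons hc with h | h
    · exact ⟨b, mem_cons_self, h⟩
    · obtain ⟨b'', hb'', h⟩ := h.exists_infix_of_intercalate hs hc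
      exact ⟨b'', mem_cons_of_mem b hb'', h⟩

theorem infix_intercalate_of_mem {b : List α} :
    ∀ {bs : List (List α)}, b ∈ bs → b <:+: ys.intercalate bs
  | [b'], hb => by simp_all
  | b' :: b'' :: bs, hb => by
    rw [intercalate_cons_cons]
    rcases mem_cons.mp hb with rfl | hb
    · exact (prefix_append _ _).isInfix.trans (prefix_append _ _).isInfix
    · exact (infix_intercalate_of_mem hb).trans (suffix_append _ _).isInfix

end List

theorem Base.comp_involutive : Function.Involutive Base.comp := fun b => by cases b <;> rfl

theorem compStr_injective : Function.Injective compStr :=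
  List.map_injective_iff.mpr Base.comp_involutive.injective

theorem forall_mem_compStr_AT {w : List Base} (hw : ∀ b ∈ w, b = .A ∨ b = .T) :
    ∀ b ∈ compStr w, b = .A ∨ b = .T := by
  simp only [compStr, List.mem_map, forall_exists_index, and_imp, forall_apply_eq_imp_iff₂]
  intro b hb
  rcases hw b hb with rfl | rfl <;> simp [Base.comp]

theorem SpecE_eq_Spec {X : Finset (List Base)} {p : List Base} {E : Finset Base}
    (hE : E.Nonempty) (hX : ∀ x ∈ X, ∀ e ∈ E, e ∉ compStr x) : SpecE X p E = Spec X p := by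
  ext x
  simp only [SpecE, Spec, Finset.mem_biUnion, Finset.mem_filter]
  constructor
  · rintro ⟨e, he, hx, h⟩
    exact ⟨hx, (List.infix_append_singleton_iff (hX x hx e he)).mp h⟩
  · rintro ⟨hx, h⟩
    obtain ⟨e, he⟩ := hE
    exact ⟨e, he, hx, (List.infix_append_singleton_iff (hX x hx e he)).mpr h⟩

theorem Spec_intercalate {X : Finset (List Base)} {ws : List (List Base)} {c : Base} {l : ℕ}
    (hl : l ≠ 0) (hX : ∀ x ∈ X, x.length = l ∧ c ∉ compStr x) (hws : ∀ w ∈ ws, w.length = l) :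
    Spec X ([c].intercalate (ws.map compStr)) = X.filter (· ∈ ws) := by
  ext x
  simp only [Spec, Finset.mem_filter]
  refine and_congr_right fun hx => ⟨fun h => ?_, fun hw => ?_⟩
  · have hne : compStr x ≠ [] := by simp [compStr, ← List.length_eq_zero_iff, (hX x hx).1, hl]
    obtain ⟨_, hb, h⟩ := h.exists_infix_of_intercalate hne (hX x hx).2
    obtain ⟨w, hw, rfl⟩ := List.mem_map.mp hb
    have hlen : (compStr x).length = (compStr w).length := by
      simp [compStr, (hX x hx).1, hws w hw]
    exact compStr_injective (h.eq_of_length hlen) ▸ hw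
  · exact List.infix_intercalate_of_mem (List.mem_map_of_mem hw)

theorem stmt2_general {U V : Type} [DecidableEq V]
    (nbrs : U → List V)
    (l : ℕ) (hl : 1 ≤ l)
    (x : V → List Base)
    (hx : ∀ v, (x v).length = l ∧ ∀ b ∈ x v, b = Base.A ∨ b = Base.T)
    (X : Finset (List Base)) (hX : ∀ w, w ∈ X ↔ ∃ v, x v = w)
    (p : U → List Base)
    (hp : ∀ u, p u = List.intercalate [Base.C] ((nbrs u).map (fun v => compStr (x v))))
    (u : U) :
    SpecE X (p u) {Base.G, Base.C} = Spec X (p u) ∧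
      Spec X (p u) = (nbrs u).toFinset.image x := by
  have hXprobe : ∀ w ∈ X, w.length = l ∧ ∀ b ∈ compStr w, b = .A ∨ b = .T := by
    rintro _ hw
    obtain ⟨v, rfl⟩ := (hX _).mp hw
    exact ⟨(hx v).1, forall_mem_compStr_AT (hx v).2⟩
  have hpu : p u = [Base.C].intercalate (((nbrs u).map x).map compStr) := by
    rw [hp, List.map_map]
    rfl
  have hSpec : Spec X (p u) = (nbrs u).toFinset.image x := by
    rw [hpu, Spec_intercalate (by omega)
      (fun w hw => ⟨(hXprobe w hw).1, fun h => by simpa using (hXprobe w hw).2 _ h⟩)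
      (by simp only [List.mem_map]; rintro _ ⟨v, -, rfl⟩; exact (hx v).1)]
    ext w
    simp only [Finset.mem_filter, hX, List.mem_map, Finset.mem_image, List.mem_toFinset]
    exact and_iff_right_of_imp fun ⟨v, _, hv⟩ => ⟨v, hv⟩
  refine ⟨SpecE_eq_Spec ⟨.G, by simp⟩ fun w hw e he h => ?_, hSpec⟩
  have hAT := (hXprobe w hw).2 e h
  simp only [Finset.mem_insert, Finset.mem_singleton] at he
  rcases he with rfl | rfl <;> simp at hAT

/-- In the bipartite graph given by neighbor lists `nbrs : U → List V` (each vertex of `U`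
having between 1 and 3 neighbors), with distinct probes `x v` of length `l` over `{A, T}`
assigned to the vertices `v ∈ V`, probe set `X = {x_v : v ∈ V}`, and primer
`p_u = comp(x_{v₁})·C·⋯·C·comp(x_{v_d})` for `N(u) = {v₁, …, v_d}`, one has
`Spec_X(p_u, {G, C}) = Spec_X(p_u) = {x_v : v ∈ N(u)}`. -/
theorem stmt2 {U V : Type} [DecidableEq V]
    (nbrs : U → List V)
    (hnodup : ∀ u, (nbrs u).Nodup)
    (hdeg : ∀ u, 1 ≤ (nbrs u).length ∧ (nbrs u).length ≤ 3)
    (l : ℕ) (hl : 1 ≤ l)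
    (x : V → List Base) (hinj : Function.Injective x)
    (hx : ∀ v, (x v).length = l ∧ ∀ b ∈ x v, b = Base.A ∨ b = Base.T)
    (X : Finset (List Base)) (hX : ∀ w, w ∈ X ↔ ∃ v, x v = w)
    (p : U → List Base)
    (hp : ∀ u, p u = List.intercalate [Base.C] ((nbrs u).map (fun v => compStr (x v))))
    (u : U) :
    SpecE X (p u) {Base.G, Base.C} = Spec X (p u) ∧
      Spec X (p u) = (nbrs u).toFinset.image x :=
  stmt2_general nbrs l hl x hx X hX p hp u
end

section
/- Let G = (U ∪ V, E) be a bipartite graph in which every vertex of U has degree at least 1 and at most 3. Fix l ≥ 1 and an injective assignment v ↦ x_v of distinct strings x_v of length l over {A, T} to the vertices v ∈ V, and let X = {x_v : v ∈ V} be the probe set. For each u ∈ U, let p_u be the primer obtained by concatenating the Watson-Crick complements comp(x_v) for v ∈ N(u) (in some fixed order) with a single letter C inserted between consecutive blocks, and set E_{p_u} = {G, C}. If U' ⊆ U and V' ⊆ V with |U'| = |V'| are such that the subgraph of G induced by U' ∪ V' is a matching, then the set of primers {p_u : u ∈ U'} is strongly 1-decodable with respect to X and the extension sets E_{p_u} =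 {G, C}. -/
/-- A family of primers `p i`, `i ∈ S`, with extension sets `E i`, is strongly
`r`-decodable with respect to the probe set `X` if for every `i ∈ S` the set
`Spec_X(p i) \ ⋃_{j ∈ S, j ≠ i} Spec_X(p j, E j)` has at least `r` elements. -/
def StronglyDecodableFam {ι : Type} [DecidableEq ι] (X : Finset (List Base))
    (S : Finset ι) (p : ι → List Base) (E : ι → Finset Base) (r : ℕ) : Prop :=
  ∀ i ∈ S, r ≤ ((Spec X (p i)) \ ((S.erase i).biUnion (fun j => SpecE X (p j) (E j)))).card

lemma aux_intercalate_cons {α : Type*} (sep b : List α) (L : List (List α)) (h : L ≠ []) :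
    List.intercalate sep (b :: L) = b ++ sep ++ List.intercalate sep L := by
  obtain ⟨c, L', rfl⟩ := List.exists_cons_of_ne_nil h
  simp [List.intercalate, List.intersperse, List.append_assoc]

/-- an element of `L` is an infix of `intercalate sep L`. -/
lemma aux_infix_of_mem {α : Type*} (sep : List α) {b : List α} :
    ∀ {L : List (List α)}, b ∈ L → b <:+: List.intercalate sep L := by
  intro L
  induction L with
  | nil => intro h; simp at h
  | cons c L' ih =>
    intro h
    rcases List.mem_cons.mp h with rfl | h
    · rcases eq_or_ne L' [] with rfl | hne
      · simp [List.intercalate]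
      · rw [aux_intercalate_cons _ _ _ hne]
        exact ⟨[], sep ++ List.intercalate sep L', by simp⟩
    · rcases eq_or_ne L' [] with rfl | hne
      · simp at h
      · rw [aux_intercalate_cons _ _ _ hne]
        exact (ih h).trans ((c ++ sep).suffix_append _).isInfix

lemma aux_step {α : Type*} {s b rest : List α} {c : α}
    (hlen : s.length = b.length) (hc : c ∉ s)
    (h : s <:+: b ++ c :: rest) : s = b ∨ s <:+: rest := by
  obtain ⟨pre, post, hpp⟩ := h
  rw [show pre ++ s ++ post = pre ++ (s ++ post) by simp [List.append_assoc]] at hpp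
  rcases List.append_eq_append_iff.mp hpp with ⟨a, hb, hsp⟩ | ⟨a, hpre, hrest⟩
  · rcases List.append_eq_append_iff.mp hsp with ⟨a', ha, hpost⟩ | ⟨a', hs, hcr⟩
    · left
      have hinf : s <:+: b := ⟨pre, a', by rw [hb, ha, List.append_assoc]⟩
      exact hinf.sublist.eq_of_length hlen
    · rcases a' with _ | ⟨d, a''⟩
      · left
        have hinf : s <:+: b := ⟨pre, [], by simp [hb, hs]⟩
        exact hinf.sublist.eq_of_length hlen
      · exfalso
        have hd : c = d := (List.cons_eq_cons.mp (by simpa using hcr)).1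
        subst hd
        exact hc (by rw [hs]; simp)
  · rcases a with _ | ⟨d, a'⟩
    · rcases s with _ | ⟨e, s'⟩
      · right; exact List.nil_infix
      · exfalso
        have he : c = e := (List.cons_eq_cons.mp (by simpa using hrest)).1
        subst he
        exact hc (by simp)
    · right
      have hd := List.cons_eq_cons.mp (by simpa [List.append_assoc] using hrest)
      exact ⟨a', post, by rw [List.append_assoc]; exact hd.2.symm⟩

/-- key lemma: a nonempty infix `s` of `intercalate [c] L ++ [e]` avoiding `c` and `e`,
with all blocks of `L` of length `s.length`, must be one of the blocks. -/
lemma aux_key {α : Type*} {s : List α} {c e : α}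
    (hs : s ≠ []) (hc : c ∉ s) (he : e ∉ s) :
    ∀ {L : List (List α)}, (∀ b ∈ L, b.length = s.length) →
      s <:+: List.intercalate [c] L ++ [e] → s ∈ L := by
  intro L
  induction L with
  | nil =>
    intro _ h
    exfalso
    simp [List.intercalate] at h
    have := h.sublist
    rcases List.sublist_singleton.mp this with rfl | rfl
    · exact hs rfl
    · exact he (by simp)
  | cons b L' ih =>
    intro hlen h
    rcases eq_or_ne L' [] with rfl | hne
    · simp [List.intercalate] at h
      rcases aux_step (hlen b (by simp)).symm he h with rfl | h2
      · simp
      · exfalso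
        exact hs (List.eq_nil_of_infix_nil h2)
    · rw [aux_intercalate_cons _ _ _ hne] at h
      rw [List.append_assoc, List.append_assoc] at h
      have h' : s <:+: b ++ c :: (List.intercalate [c] L' ++ [e]) := by
        simpa using h
      rcases aux_step (hlen b (by simp)).symm hc h' with rfl | h2
      · simp
      · exact List.mem_cons_of_mem _ (ih (fun b hb => hlen b (List.mem_cons_of_mem _ hb)) h2)

/-- If `U' ⊆ U` and `V' ⊆ V` with `|U'| = |V'|` induce a matching in the bipartite graph
(every vertex of `U' ∪ V'` has exactly one neighbor inside `U' ∪ V'`), then the primers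
`{p_u : u ∈ U'}` (with extension sets `{G, C}`) are strongly 1-decodable w.r.t. `X`. -/
theorem stmt3 {U V : Type} [DecidableEq U] [DecidableEq V]
    (nbrs : U → List V)
    (hnodup : ∀ u, (nbrs u).Nodup)
    (hdeg : ∀ u, 1 ≤ (nbrs u).length ∧ (nbrs u).length ≤ 3)
    (l : ℕ) (hl : 1 ≤ l)
    (x : V → List Base) (hinj : Function.Injective x)
    (hx : ∀ v, (x v).length = l ∧ ∀ b ∈ x v, b = Base.A ∨ b = Base.T)
    (X : Finset (List Base)) (hX : ∀ w, w ∈ X ↔ ∃ v, x v = w)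
    (p : U → List Base)
    (hp : ∀ u, p u = List.intercalate [Base.C] ((nbrs u).map (fun v => compStr (x v))))
    (U' : Finset U) (V' : Finset V) (hcard : U'.card = V'.card)
    (hmatchU : ∀ u ∈ U', ∃! v, v ∈ V' ∧ v ∈ nbrs u)
    (hmatchV : ∀ v ∈ V', ∃! u, u ∈ U' ∧ v ∈ nbrs u) :
    StronglyDecodableFam X U' p (fun _ => ({Base.G, Base.C} : Finset Base)) 1 := by
  intro u hu
  obtain ⟨v, ⟨hvV, hvn⟩, _⟩ := hmatchU u hu
  rw [Finset.one_le_card]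
  refine ⟨x v, Finset.mem_sdiff.mpr ⟨?_, ?_⟩⟩
  · rw [Spec, Finset.mem_filter]
    refine ⟨(hX (x v)).mpr ⟨v, rfl⟩, ?_⟩
    rw [hp u]
    exact aux_infix_of_mem [Base.C] (List.mem_map.mpr ⟨v, hvn, rfl⟩)
  · intro hmem
    rw [Finset.mem_biUnion] at hmem
    obtain ⟨j, hj, hmem⟩ := hmem
    rw [SpecE, Finset.mem_biUnion] at hmem
    obtain ⟨ee, hee, hmem⟩ := hmem
    rw [Spec, Finset.mem_filter] at hmem
    -- letters of compStr (x v) are in {A, T}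
    have hlet : ∀ b ∈ compStr (x v), b = Base.T ∨ b = Base.A := by
      intro b hb
      rw [compStr, List.mem_map] at hb
      obtain ⟨a, ha, rfl⟩ := hb
      rcases (hx v).2 a ha with rfl | rfl
      · left; rfl
      · right; rfl
    have hC : Base.C ∉ compStr (x v) := fun h => by rcases hlet _ h with h | h <;> simp at h
    have hG : Base.G ∉ compStr (x v) := fun h => by rcases hlet _ h with h | h <;> simp at h
    have hE : ee ∉ compStr (x v) := by
      simp only [Finset.mem_insert, Finset.mem_singleton] at hee
      rcases hee with rfl | rfl
      exacts [hG, hC]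
    have hne : compStr (x v) ≠ [] := by
      intro h
      have := congrArg List.length h
      simp [compStr, (hx v).1] at this
      omega
    have hlens : ∀ b ∈ (nbrs j).map (fun w => compStr (x w)), b.length = (compStr (x v)).length := by
      intro b hb
      rw [List.mem_map] at hb
      obtain ⟨w, _, rfl⟩ := hb
      simp [compStr, (hx w).1, (hx v).1]
    have hinf : compStr (x v) <:+: List.intercalate [Base.C] ((nbrs j).map (fun w => compStr (x w))) ++ [ee] := by
      rw [← hp j]; exact hmem.2
    have hmem2 := aux_key hne hC hE hlens hinf
    rw [List.mem_map] at hmem2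
    obtain ⟨w, hw, hcomp⟩ := hmem2
    have hid : ∀ b : Base, Base.comp (Base.comp b) = b := by intro b; cases b <;> rfl
    have hxvw : x w = x v := by
      have h2 := congrArg (List.map Base.comp) hcomp
      have h3 : (Base.comp ∘ Base.comp) = id := funext hid
      simpa [compStr, List.map_map, h3] using h2
    have hwv : w = v := hinj hxvw
    rw [hwv] at hw
    obtain ⟨u0, _, huniq⟩ := hmatchV v hvV
    have h1 : j = u0 := huniq j ⟨Finset.mem_of_mem_erase hj, hw⟩
    have h2 : u = u0 := huniq u ⟨hu, hvn⟩
    exact (Finset.ne_of_mem_erase hj) (h1.trans h2.symm)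
end

section
/- Let G = (U ∪ V, E) be a bipartite graph in which every vertex of U has degree at least 1 and at most 3. Fix l ≥ 1 and an injective assignment v ↦ x_v of distinct strings x_v of length l over {A, T} to the vertices v ∈ V, and let X = {x_v : v ∈ V} be the probe set. For each u ∈ U, let p_u be the primer obtained by concatenating the Watson-Crick complements comp(x_v) for v ∈ N(u) (in some fixed order) with a single letter C inserted between consecutive blocks, and set E_{p_u} = {G, C}. If U' ⊆ U is such that the set of primers {p_u : u ∈ U'} is strongly 1-decodable with respect to X and the extension sets E_{p_u} = {G, C}, then there exists V' ⊆ V with |V'| = |U'| such that the subgraph of G induced by U' ∪ V' is a matching. -/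
/-!
A probe `x_v` is written over `{A, T}`, so its complement contains no `C`; all blocks of the
primer `p_u` have the probe length, so the `C` separators force every probe read off `p_u` to be
one of its blocks. Hence `Spec_X(p_u) = {x_v : v ∈ N(u)}`, and every such probe also lies in
`Spec_X(p_u, E)` for nonempty `E`. Strong 1-decodability therefore gives each `u ∈ U'` a neighbour
`v_u` adjacent to no other vertex of `U'`, and `V' = {v_u : u ∈ U'}` is the required matching.
-/

namespace List

variable {α : Type*}

theorem infix_or_infix_of_infix_append_cons {w xs ys : List α} {c : α} (hc : c ∉ w)
    (h : w <:+: xs ++ c :: ys) : w <:+: xs ∨ w <:+: ys := by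
  rcases infix_append_iff.1 h with h | h | ⟨w₁, w₂, rfl, hw₁, hw₂⟩
  · exact .inl h
  · rcases infix_cons_iff.1 h with h | h
    · rcases prefix_cons_iff.1 h with rfl | ⟨t, rfl, -⟩
      · exact .inl nil_infix
      · exact absurd (mem_cons_self ..) hc
    · exact .inr h
  · rcases prefix_cons_iff.1 hw₂ with rfl | ⟨t, rfl, -⟩
    · exact .inl (by simpa using hw₁.isInfix)
    · exact absurd (mem_append_right w₁ (mem_cons_self ..)) hc

theorem mem_of_infix_intercalate {w : List α} {c : α} {L : List (List α)} (hw : w ≠ [])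
    (hc : c ∉ w) (hL : ∀ a ∈ L, a.length = w.length) (h : w <:+: [c].intercalate L) : w ∈ L := by
  induction L with
  | nil => exact absurd (eq_nil_of_infix_nil h) hw
  | cons a L ih =>
    cases L with
    | nil =>
      rw [intercalate_singleton] at h
      exact mem_singleton.2 (h.eq_of_length (hL a (mem_singleton_self a)).symm)
    | cons b L =>
      rw [intercalate_cons_cons, append_assoc, singleton_append] at h
      rcases infix_or_infix_of_infix_append_cons hc h with h | h
      · exact mem_cons.2 (.inl (h.eq_of_length (hL a mem_cons_self).symm))
      · exact mem_cons_of_mem a (ih (fun a ha => hL a (mem_cons_of_mem _ ha)) h)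

theorem infix_intercalate_of_mem_s4 {a s : List α} {L : List (List α)} (h : a ∈ L) :
    a <:+: s.intercalate L := by
  induction L with
  | nil => cases h
  | cons b L ih =>
    cases L with
    | nil => simpa using (mem_singleton.1 h).symm ▸ infix_refl a
    | cons c L =>
      rw [intercalate_cons_cons]
      rcases mem_cons.1 h with rfl | h
      · exact (prefix_append a s).isInfix.trans (prefix_append _ _).isInfix
      · exact (ih h).trans (suffix_append _ _).isInfix

end List

theorem Base.C_notMem_compStr {w : List Base} (hw : ∀ b ∈ w, b = Base.A ∨ b = Base.T) :
    Base.C ∉ compStr w := by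
  intro hC
  obtain ⟨b, hb, hbC⟩ := List.mem_map.1 hC
  rcases hw b hb with rfl | rfl <;> cases hbC

theorem mem_Spec {X : Finset (List Base)} {y w : List Base} :
    w ∈ Spec X y ↔ w ∈ X ∧ compStr w <:+: y :=
  Finset.mem_filter

theorem mem_SpecE_of_mem_Spec {X : Finset (List Base)} {p w : List Base} {E : Finset Base}
    {e : Base} (he : e ∈ E) (hw : w ∈ Spec X p) : w ∈ SpecE X p E :=
  Finset.mem_biUnion.2 ⟨e, he, mem_Spec.2 ⟨(mem_Spec.1 hw).1,
    (mem_Spec.1 hw).2.trans (List.prefix_append p [e]).isInfix⟩⟩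

theorem StronglyDecodableFam.exists_private_probe {ι : Type} [DecidableEq ι]
    {X : Finset (List Base)} {S : Finset ι} {p : ι → List Base} {E : ι → Finset Base} {r : ℕ}
    (hdec : StronglyDecodableFam X S p E r) (hr : 0 < r) {i : ι} (hi : i ∈ S) :
    ∃ w ∈ Spec X (p i), ∀ j ∈ S, j ≠ i → w ∉ SpecE X (p j) (E j) := by
  obtain ⟨w, hw⟩ := Finset.card_pos.1 (hr.trans_le (hdec i hi))
  obtain ⟨hwi, hwj⟩ := Finset.mem_sdiff.1 hw
  exact ⟨w, hwi, fun j hj hji hwj' =>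
    hwj (Finset.mem_biUnion.2 ⟨j, Finset.mem_erase.2 ⟨hji, hj⟩, hwj'⟩)⟩

section Primer

variable {V : Type} {x : V → List Base} {X : Finset (List Base)}

theorem mem_Spec_intercalate {vs : List V} {v : V} (hvX : x v ∈ X) (hv : v ∈ vs) :
    x v ∈ Spec X (List.intercalate [Base.C] (vs.map fun v => compStr (x v))) :=
  mem_Spec.2 ⟨hvX, List.infix_intercalate_of_mem_s4 (List.mem_map_of_mem hv)⟩

theorem mem_of_mem_Spec_intercalate {l : ℕ} (hl : 1 ≤ l) (hinj : Function.Injective x)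
    (hx : ∀ v, (x v).length = l ∧ ∀ b ∈ x v, b = Base.A ∨ b = Base.T) {vs : List V} {v : V}
    (h : x v ∈ Spec X (List.intercalate [Base.C] (vs.map fun v => compStr (x v)))) :
    v ∈ vs := by
  have hlen : ∀ v, (compStr (x v)).length = l := fun v => by simp [compStr, (hx v).1]
  have hblock : compStr (x v) ∈ vs.map fun v => compStr (x v) := by
    refine List.mem_of_infix_intercalate ?_ (Base.C_notMem_compStr (hx v).2) ?_ (mem_Spec.1 h).2
    · exact List.ne_nil_of_length_pos (by rw [hlen]; omega)
    · simp only [List.mem_map]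
      rintro _ ⟨v', -, rfl⟩
      rw [hlen, hlen]
  obtain ⟨v', hv', hv'v⟩ := List.mem_map.1 hblock
  rwa [← hinj (compStr_injective hv'v)]

end Primer

theorem exists_induced_matching_of_private_neighbors {U V : Type} [DecidableEq V]
    (adj : U → V → Prop) (U' : Finset U)
    (h : ∀ u ∈ U', ∃ v, adj u v ∧ ∀ u' ∈ U', adj u' v → u' = u) :
    ∃ V' : Finset V, V'.card = U'.card ∧
      (∀ u ∈ U', ∃! v, v ∈ V' ∧ adj u v) ∧ (∀ v ∈ V', ∃! u, u ∈ U' ∧ adj u v) := by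
  choose f hadj hpriv using h
  let g : U' → V := fun u => f u u.2
  have hg : ∀ u u' : U', adj u' (g u) → u' = u := fun u u' h =>
    Subtype.ext (hpriv u u.2 u' u'.2 h)
  have hginj : Function.Injective g := fun u u' h => hg u' u (h ▸ hadj u u.2)
  refine ⟨U'.attach.image g, by rw [Finset.card_image_of_injective _ hginj, Finset.card_attach],
    fun u hu => ⟨g ⟨u, hu⟩, ⟨Finset.mem_image_of_mem g (Finset.mem_attach _ _), hadj u hu⟩, ?_⟩,
    ?_⟩
  · rintro _ ⟨hv, hadj'⟩
    obtain ⟨u'', -, rfl⟩ := Finset.mem_image.1 hv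
    rw [hg u'' ⟨u, hu⟩ hadj']
  · intro v hv
    obtain ⟨u, -, rfl⟩ := Finset.mem_image.1 hv
    exact ⟨u, ⟨u.2, hadj u u.2⟩,
      fun u' ⟨hu', hadj'⟩ => congrArg Subtype.val (hg u ⟨u', hu'⟩ hadj')⟩

theorem stmt4_general {U V : Type} [DecidableEq U] [DecidableEq V]
    (nbrs : U → List V)
    (l : ℕ) (hl : 1 ≤ l)
    (x : V → List Base) (hinj : Function.Injective x)
    (hx : ∀ v, (x v).length = l ∧ ∀ b ∈ x v, b = Base.A ∨ b = Base.T)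
    (X : Finset (List Base)) (hX : ∀ w, w ∈ X ↔ ∃ v, x v = w)
    (p : U → List Base)
    (hp : ∀ u, p u = List.intercalate [Base.C] ((nbrs u).map (fun v => compStr (x v))))
    (U' : Finset U)
    (hdec : StronglyDecodableFam X U' p (fun _ => ({Base.G, Base.C} : Finset Base)) 1) :
    ∃ V' : Finset V, V'.card = U'.card ∧
      (∀ u ∈ U', ∃! v, v ∈ V' ∧ v ∈ nbrs u) ∧
      (∀ v ∈ V', ∃! u, u ∈ U' ∧ v ∈ nbrs u) := by
  refine exists_induced_matching_of_private_neighbors (fun u v => v ∈ nbrs u) U' fun u hu => ?_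
  obtain ⟨w, hw, hpriv⟩ := hdec.exists_private_probe one_pos hu
  obtain ⟨v, rfl⟩ := (hX w).1 (mem_Spec.1 hw).1
  refine ⟨v, mem_of_mem_Spec_intercalate hl hinj hx (hp u ▸ hw), fun u' hu' hvu' => ?_⟩
  by_contra hne
  refine hpriv u' hu' hne (mem_SpecE_of_mem_Spec (Finset.mem_insert_self _ _) ?_)
  exact hp u' ▸ mem_Spec_intercalate (mem_Spec.1 hw).1 hvu'

/-- Conversely, if for `U' ⊆ U` the primers `{p_u : u ∈ U'}` (with extension sets `{G, C}`)
are strongly 1-decodable w.r.t. `X`, then there is `V' ⊆ V` with `|V'| = |U'|` such that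
`U' ∪ V'` induces a matching in the bipartite graph. -/
theorem stmt4 {U V : Type} [DecidableEq U] [DecidableEq V]
    (nbrs : U → List V)
    (hnodup : ∀ u, (nbrs u).Nodup)
    (hdeg : ∀ u, 1 ≤ (nbrs u).length ∧ (nbrs u).length ≤ 3)
    (l : ℕ) (hl : 1 ≤ l)
    (x : V → List Base) (hinj : Function.Injective x)
    (hx : ∀ v, (x v).length = l ∧ ∀ b ∈ x v, b = Base.A ∨ b = Base.T)
    (X : Finset (List Base)) (hX : ∀ w, w ∈ X ↔ ∃ v, x v = w)
    (p : U → List Base)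
    (hp : ∀ u, p u = List.intercalate [Base.C] ((nbrs u).map (fun v => compStr (x v))))
    (U' : Finset U)
    (hdec : StronglyDecodableFam X U' p (fun _ => ({Base.G, Base.C} : Finset Base)) 1) :
    ∃ V' : Finset V, V'.card = U'.card ∧
      (∀ u ∈ U', ∃! v, v ∈ V' ∧ v ∈ nbrs u) ∧
      (∀ v ∈ V', ∃! u, u ∈ U' ∧ v ∈ nbrs u) :=
  stmt4_general nbrs l hl x hinj hx X hX p hp U' hdec
end
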